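/- arXiv:2112.11896 — 5 statements merged into one kernel-verified Lean document; each statement's English description precedes it below -/
import Mathlib

section
/- Let q and k both be even, q a prime power, 1 ≤ k ≤ q, and write k = q − 2r. Let ω be a primitive element of F_{q²}, α = ω^{q−1}, and let c_0, …, c_{2r+1} ∈ F_q be defined by ∏_{i=−r}^{r} (X − α^i) = Σ_{j=0}^{2r+1} c_j X^j. Fix β ∈ F_{q²} with β + β^q = 1, and for a ∈ {0, …, k−1} define h_a(X) = Σ_{i=1}^{q/2} Σ_{j=0}^{2r+1} c_j α^{i(j+a)} X^{q/2 − i} + Σ_{j=0}^{2r+1} c_j β X^{q/2}. Then deg h_a ≤ k/2 − 1; in particular the coefficients of X^m in h_a vanish for all m with k/2 − 1 < m ≤ q/2. -/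
open Polynomial

/-! Writing `g = ∏_{i=-r}^{r} (X - α^i)`, the inner sum `Σ_j c_j α^{i(j+a)}` is `α^{ia} g(α^i)`,
which vanishes for `0 ≤ i ≤ r`. So the `β`-term (`i = 0`) and the terms `X^{q/2-i}` with `i ≤ r`
drop out, and every surviving exponent is `q/2 - i < q/2 - r = k/2`. -/

namespace Polynomial

theorem eval_prod_X_sub_C_apply {R ι : Type*} [CommRing R] {s : Finset ι} (f : ι → R) {i : ι}
    (hi : i ∈ s) : (∏ j ∈ s, (X - C (f j))).eval (f i) = 0 := by
  rw [eval_prod]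
  exact Finset.prod_eq_zero hi (by rw [eval_sub, eval_X, eval_C, sub_self])

variable {R : Type*} [CommRing R]

theorem sum_range_coeff_mul_pow_mul_add {g : R[X]} {n : ℕ} (hgn : g.natDegree < n)
    (x : R) (i a : ℕ) :
    ∑ j ∈ Finset.range n, g.coeff j * x ^ (i * (j + a)) = g.eval (x ^ i) * x ^ (i * a) := by
  rw [eval_eq_sum_range' hgn, Finset.sum_mul]
  refine Finset.sum_congr rfl fun j _ => ?_
  rw [mul_add, pow_add, pow_mul, mul_assoc]

theorem degree_sum_C_mul_X_pow_sub_le {g : R[X]} {n : ℕ} (hgn : g.natDegree < n) {N r : ℕ}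
    (x : R) (hroot : ∀ i ≤ r, g.eval (x ^ i) = 0) (β : R) (a : ℕ) :
    (∑ i ∈ Finset.Icc 1 N, ∑ j ∈ Finset.range n, C (g.coeff j * x ^ (i * (j + a))) * X ^ (N - i)
      + C (∑ j ∈ Finset.range n, g.coeff j * β) * X ^ N).degree
      ≤ ((N - r - 1 : ℕ) : WithBot ℕ) := by
  have hconst : ∑ j ∈ Finset.range n, g.coeff j * β = 0 := by
    have h1 : g.eval 1 = 0 := by simpa using hroot 0 (Nat.zero_le r)
    rw [← Finset.sum_mul, ← zero_mul β, ← h1, eval_eq_sum_range' hgn]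
    simp only [one_pow, mul_one]
  rw [hconst, C_0, zero_mul, add_zero]
  refine (degree_sum_le _ _).trans (Finset.sup_le fun i hi => ?_)
  rw [← Finset.sum_mul, ← map_sum, sum_range_coeff_mul_pow_mul_add hgn]
  by_cases hir : i ≤ r
  · simp [hroot i hir]
  · have hiN : N - i ≤ N - r - 1 := by omega
    exact (degree_C_mul_X_pow_le _ _).trans (by exact_mod_cast hiN)

end Polynomial

theorem ha_degree_bound_even_even_general
    (q k r : ℕ) (F K : Type*) [Field F] [Field K] [Algebra F K]
    (hkr : (k : ℤ) = q - 2 * r)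
    (α : K)
    (c : ℕ → F)
    (hc : ∀ j, algebraMap F K (c j) =
      (∏ i ∈ Finset.Icc (-(r : ℤ)) (r : ℤ), (X - C (α ^ i))).coeff j)
    (β : K)
    (a : ℕ)
    (h : Polynomial K)
    (hh : h = ∑ i ∈ Finset.Icc 1 (q / 2), ∑ j ∈ Finset.range (2 * r + 2),
        C (algebraMap F K (c j) * α ^ (i * (j + a))) * X ^ (q / 2 - i)
      + C (∑ j ∈ Finset.range (2 * r + 2), algebraMap F K (c j) * β) * X ^ (q / 2)) :
    h.degree ≤ (k / 2 - 1 : ℕ) ∧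
    ∀ m : ℕ, k / 2 - 1 < m → m ≤ q / 2 → h.coeff m = 0 := by
  set g := ∏ i ∈ Finset.Icc (-(r : ℤ)) (r : ℤ), (X - C (α ^ i))
  have hg : g.natDegree < 2 * r + 2 := by
    rw [natDegree_finsetProd_X_sub_C_eq_card, Int.card_Icc]
    omega
  have hroot : ∀ i ≤ r, g.eval (α ^ i) = 0 := fun i hi => by
    rw [← zpow_natCast]
    exact eval_prod_X_sub_C_apply (α ^ ·) (Finset.mem_Icc.2 ⟨by omega, by omega⟩)
  have hdeg : h.degree ≤ (k / 2 - 1 : ℕ) := by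
    simp only [hc] at hh
    rw [hh]
    convert degree_sum_C_mul_X_pow_sub_le hg α hroot β a using 2
    omega
  exact ⟨hdeg, fun m hm _ => coeff_eq_zero_of_degree_lt (hdeg.trans_lt (by exact_mod_cast hm))⟩

/-- Let `q` and `k` both be even, `q` a prime power, `1 ≤ k ≤ q`, and write
`k = q − 2r`.  Let `ω` be a primitive element of `K = 𝔽_{q²}`, `α = ω^{q−1}`, and let
`c₀, …, c_{2r+1} ∈ F = 𝔽_q` be defined by `∏_{i=−r}^{r} (X − α^i) = Σ_{j=0}^{2r+1} c_j X^j`.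
Fix `β ∈ K` with `β + β^q = 1`, and for `a ∈ {0, …, k−1}` define
`h_a(X) = Σ_{i=1}^{q/2} Σ_{j=0}^{2r+1} c_j α^{i(j+a)} X^{q/2 − i}
          + Σ_{j=0}^{2r+1} c_j β X^{q/2}`.
Then `deg h_a ≤ k/2 − 1`; in particular the coefficients of `X^m` in `h_a` vanish for all
`m` with `k/2 − 1 < m ≤ q/2`. -/
theorem ha_degree_bound_even_even
    (q k r : ℕ) (F K : Type*) [Field F] [Fintype F] [Field K] [Fintype K] [Algebra F K]
    (hF : Fintype.card F = q) (hK : Fintype.card K = q ^ 2)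
    (hqeven : Even q) (hkeven : Even k) (hk1 : 1 ≤ k) (hkq : k ≤ q)
    (hkr : (k : ℤ) = q - 2 * r)
    (ω : K) (hω : orderOf ω = q ^ 2 - 1)
    (α : K) (hα : α = ω ^ (q - 1))
    (c : ℕ → F)
    (hc : ∀ j, algebraMap F K (c j) =
      (∏ i ∈ Finset.Icc (-(r : ℤ)) (r : ℤ), (X - C (α ^ i))).coeff j)
    (β : K) (hβ : β + β ^ q = 1)
    (a : ℕ) (ha : a < k)
    (h : Polynomial K)
    (hh : h = ∑ i ∈ Finset.Icc 1 (q / 2), ∑ j ∈ Finset.range (2 * r + 2),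
        C (algebraMap F K (c j) * α ^ (i * (j + a))) * X ^ (q / 2 - i)
      + C (∑ j ∈ Finset.range (2 * r + 2), algebraMap F K (c j) * β) * X ^ (q / 2)) :
    h.degree ≤ (k / 2 - 1 : ℕ) ∧
    ∀ m : ℕ, k / 2 - 1 < m → m ≤ q / 2 → h.coeff m = 0 :=
  ha_degree_bound_even_even_general q k r F K hkr α c hc β a h hh
end

section
/- Let q be an even prime power and k odd with 1 ≤ k ≤ q, and write k = q − 2r − 1. Let ω be a primitive element of F_{q²}, α = ω^{q−1}, and let c_0, …, c_{2r+2} ∈ F_q be defined by ∏_{i=q/2−r}^{q/2+r+1} (X − α^i) = Σ_{j=0}^{2r+2} c_j X^j. Fix β ∈ F_{q²} with β + β^q = 1, and for a ∈ {0, …, k−1} define h_a(X) = Σ_{i=1}^{q/2} Σ_{j=0}^{2r+2} c_j α^{(i + q/2)(j+a)} X^{q/2 + 1 − i} + Σ_{j=0}^{2r+2} c_j β. Then deg h_a ≤ (k−1)/2; in particular the coefficients of X^m in h_a vanish for all m with (k−1)/2 < m ≤ q/2. -/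
open Polynomial Finset

/-! The coefficient of `X^m` in `h_a` is, for `1 ≤ m ≤ q/2`, equal to `α^{sa} g₂(α^s)` with
`s = q + 1 - m`, and `s` lies in the range of exponents of the roots of `g₂` exactly when
`m > (k-1)/2 = q/2 - r - 1`. -/

theorem coeff_sum_C_mul_X_pow_reflect {R : Type*} [Semiring R] (f : ℕ → R) (n m : ℕ) :
    (∑ i ∈ Icc 1 n, C (f i) * X ^ (n + 1 - i)).coeff m =
      if 1 ≤ m ∧ m ≤ n then f (n + 1 - m) else 0 := by
  simp only [finsetSum_coeff, coeff_C_mul_X_pow]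
  split_ifs with hm
  · rw [sum_eq_single (n + 1 - m)]
    · rw [if_pos (by omega)]
    · intro i hi hne
      rw [mem_Icc] at hi
      rw [if_neg (by omega)]
    · intro hni
      exact absurd (mem_Icc.2 (by omega)) hni
  · refine sum_eq_zero fun i hi => ?_
    rw [mem_Icc] at hi
    rw [if_neg (by omega)]

theorem sum_coeff_mul_pow_mul_add {R : Type*} [CommSemiring R] {p : R[X]} {N : ℕ}
    (hN : p.natDegree < N) (y : R) (s a : ℕ) :
    ∑ j ∈ range N, p.coeff j * y ^ (s * (j + a)) = y ^ (s * a) * p.eval (y ^ s) := by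
  rw [eval_eq_sum_range' hN, mul_sum]
  refine sum_congr rfl fun j _ => ?_
  rw [mul_add, pow_add, pow_mul]
  ring

theorem ha_degree_bound_odd_even_general
    (q k r : ℕ) (F K : Type*) [Field F] [Field K] [Algebra F K]
    (hqeven : Even q)
    (hkr : (k : ℤ) = q - 2 * r - 1)
    (α : K)
    (c : ℕ → F)
    (hc : ∀ j, algebraMap F K (c j) =
      (∏ i ∈ Finset.Icc (q / 2 - r) (q / 2 + r + 1), (X - C (α ^ i))).coeff j)
    (β : K)
    (a : ℕ)
    (h : Polynomial K)
    (hh : h = ∑ i ∈ Finset.Icc 1 (q / 2), ∑ j ∈ Finset.range (2 * r + 3),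
        C (algebraMap F K (c j) * α ^ ((i + q / 2) * (j + a))) * X ^ (q / 2 + 1 - i)
      + C (∑ j ∈ Finset.range (2 * r + 3), algebraMap F K (c j) * β)) :
    h.degree ≤ ((k - 1) / 2 : ℕ) ∧
    ∀ m : ℕ, (k - 1) / 2 < m → m ≤ q / 2 → h.coeff m = 0 := by
  have hq : q = 2 * (q / 2) := (Nat.two_mul_div_two_of_even hqeven).symm
  have hdeg : (Lagrange.nodal (Icc (q / 2 - r) (q / 2 + r + 1)) (α ^ ·)).natDegree
      < 2 * r + 3 := by
    rw [Lagrange.natDegree_nodal, Nat.card_Icc]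
    omega
  have hcoeff : ∀ m, (k - 1) / 2 < m → h.coeff m = 0 := by
    intro m hm
    simp_rw [hh, ← sum_mul, ← map_sum]
    rw [coeff_add, coeff_C, if_neg (by omega), add_zero, coeff_sum_C_mul_X_pow_reflect]
    split_ifs with hmq
    · simp_rw [hc, ← Lagrange.nodal_eq]
      rw [sum_coeff_mul_pow_mul_add hdeg, Lagrange.eval_nodal_at_node (mem_Icc.2 (by omega)),
        mul_zero]
    · rfl
  exact ⟨degree_le_iff_coeff_zero _ _ |>.2 fun m hm => hcoeff m (by exact_mod_cast hm),
    fun m hm _ => hcoeff m hm⟩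

/-- Let `q` be an even prime power and `k` odd with `1 ≤ k ≤ q`, and write
`k = q − 2r − 1`.  Let `ω` be a primitive element of `K = 𝔽_{q²}`, `α = ω^{q−1}`, and let
`c₀, …, c_{2r+2} ∈ F = 𝔽_q` be defined by
`∏_{i=q/2−r}^{q/2+r+1} (X − α^i) = Σ_{j=0}^{2r+2} c_j X^j`.
Fix `β ∈ K` with `β + β^q = 1`, and for `a ∈ {0, …, k−1}` define
`h_a(X) = Σ_{i=1}^{q/2} Σ_{j=0}^{2r+2} c_j α^{(i + q/2)(j+a)} X^{q/2 + 1 − i}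
          + Σ_{j=0}^{2r+2} c_j β`.
Then `deg h_a ≤ (k−1)/2`; in particular the coefficients of `X^m` in `h_a` vanish for all
`m` with `(k−1)/2 < m ≤ q/2`. -/
theorem ha_degree_bound_odd_even
    (q k r : ℕ) (F K : Type*) [Field F] [Fintype F] [Field K] [Fintype K] [Algebra F K]
    (hF : Fintype.card F = q) (hK : Fintype.card K = q ^ 2)
    (hqeven : Even q) (hkodd : Odd k) (hk1 : 1 ≤ k) (hkq : k ≤ q)
    (hkr : (k : ℤ) = q - 2 * r - 1)
    (ω : K) (hω : orderOf ω = q ^ 2 - 1)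
    (α : K) (hα : α = ω ^ (q - 1))
    (c : ℕ → F)
    (hc : ∀ j, algebraMap F K (c j) =
      (∏ i ∈ Finset.Icc (q / 2 - r) (q / 2 + r + 1), (X - C (α ^ i))).coeff j)
    (β : K) (hβ : β + β ^ q = 1)
    (a : ℕ) (ha : a < k)
    (h : Polynomial K)
    (hh : h = ∑ i ∈ Finset.Icc 1 (q / 2), ∑ j ∈ Finset.range (2 * r + 3),
        C (algebraMap F K (c j) * α ^ ((i + q / 2) * (j + a))) * X ^ (q / 2 + 1 - i)
      + C (∑ j ∈ Finset.range (2 * r + 3), algebraMap F K (c j) * β)) :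
    h.degree ≤ ((k - 1) / 2 : ℕ) ∧
    ∀ m : ℕ, (k - 1) / 2 < m → m ≤ q / 2 → h.coeff m = 0 :=
  ha_degree_bound_odd_even_general q k r F K hqeven hkr α c hc β a h hh
end

section
/- Let q be an even prime power and k odd with 1 ≤ k ≤ q, and write k = q − 2r − 1. Let ω be a primitive element of F_{q²}, α = ω^{q−1}, and let c_0, …, c_{2r+2} ∈ F_q be defined by ∏_{i=q/2−r}^{q/2+r+1} (X − α^i) = Σ_{j=0}^{2r+2} c_j X^j; set c_j = 0 for j < 0 or j > 2r+2. Fix β ∈ F_{q²} with β + β^q = 1, and for a ∈ {0, …, k−1} define h_a(X) = Σ_{i=1}^{q/2} Σ_{j=0}^{2r+2} c_j α^{(i + q/2)(j+a)} X^{q/2 + 1 − i} + Σ_{j=0}^{2r+2} c_j β. Then for every s ∈ {0, 1, …, q}, h_a(α^s) + h_a(α^s)^q = c_{s−a}. -/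
open Polynomial Finset

/-! Write `q = 2n`. Since the `c_j` lie in `𝔽_q` and `β + β^q = 1`, the value `h_a(x) + h_a(x)^q`
is `∑_j c_j (1 + ∑_i (y_ij + y_ij^q))`, where `y_ij` are the monomials of `h_a` at `x = α^s`.
For `t = j + a` and `w = α^((n+1)t + ns)` one has `y_ij = w^(2i-1)`, and as `w^(q+1) = 1` the
`q`-th powers of these odd powers are the even powers `w², …, w^(2n)`. Hence the bracket is
the geometric sum `∑_{m=0}^{q} w^m`, which is `q + 1 = 1` if `w = 1` and `0` otherwise; finally
`w = 1` iff `t ≡ s (mod q+1)`, i.e. `t = s` since `0 ≤ t, s ≤ q`. -/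

theorem sum_range_two_mul_add_one {M : Type*} [AddCommMonoid M] (f : ℕ → M) (n : ℕ) :
    ∑ m ∈ range (2 * n + 1), f m = f 0 + ∑ i ∈ Icc 1 n, (f (2 * i - 1) + f (2 * i)) := by
  induction n with
  | zero => simp
  | succ n ih =>
    rw [show 2 * (n + 1) + 1 = 2 * n + 1 + 1 + 1 by ring, sum_range_succ, sum_range_succ, ih,
      sum_Icc_succ_top (by omega), add_assoc, add_assoc]
    congr 3

theorem sum_Icc_reflect {M : Type*} [AddCommMonoid M] (f : ℕ → M) (n : ℕ) :
    ∑ i ∈ Icc 1 n, f (n + 1 - i) = ∑ i ∈ Icc 1 n, f i := by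
  refine sum_nbij' (fun i ↦ n + 1 - i) (fun i ↦ n + 1 - i) ?_ ?_ ?_ ?_ ?_ <;>
    intro i hi <;> simp only [mem_Icc] at hi ⊢ <;> omega

section RootOfUnity

variable {K : Type*} [Field K]

theorem one_add_sum_odd_pow_add_pow_two_mul {w : K} {n : ℕ} (hw : w ^ (2 * n + 1) = 1) :
    1 + ∑ i ∈ Icc 1 n, (w ^ (2 * i - 1) + (w ^ (2 * i - 1)) ^ (2 * n)) =
      ∑ m ∈ range (2 * n + 1), w ^ m := by
  have hinv : ∑ i ∈ Icc 1 n, (w ^ (2 * i - 1)) ^ (2 * n) = ∑ i ∈ Icc 1 n, w ^ (2 * i) := by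
    rw [← sum_Icc_reflect (fun i ↦ w ^ (2 * i))]
    refine sum_congr rfl fun i hi ↦ ?_
    rw [mem_Icc] at hi
    rw [← pow_mul, show (2 * i - 1) * (2 * n) = 2 * (n + 1 - i) + (2 * n + 1) * (2 * i - 2) by
      zify [hi.1, (by omega : i ≤ n + 1), (by omega : 1 ≤ 2 * i), (by omega : 2 ≤ 2 * i)]
      ring, pow_add, pow_mul w (2 * n + 1), hw, one_pow, mul_one]
  rw [sum_range_two_mul_add_one, sum_add_distrib, sum_add_distrib, hinv, pow_zero]

theorem pow_mul_pow_eq_pow_two_mul_sub_one {α : K} {n : ℕ} (hα : α ^ (2 * n + 1) = 1)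
    (t s : ℕ) {i : ℕ} (hi1 : 1 ≤ i) (hin : i ≤ n + 1) :
    α ^ ((i + n) * t) * (α ^ s) ^ (n + 1 - i) = (α ^ ((n + 1) * t + n * s)) ^ (2 * i - 1) := by
  rw [← pow_mul, ← pow_mul,
    show ((n + 1) * t + n * s) * (2 * i - 1) = ((i + n) * t + s * (n + 1 - i)) +
      (2 * n + 1) * ((i - 1) * (t + s)) by
      zify [hi1, hin, (by omega : 1 ≤ 2 * i)]
      ring, pow_add, pow_mul α (2 * n + 1), hα, one_pow, mul_one, pow_add]

theorem pow_succ_mul_add_mul_eq_one_iff {α : K} {n : ℕ} (hα : orderOf α = 2 * n + 1) {t s : ℕ}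
    (ht : t ≤ 2 * n) (hs : s ≤ 2 * n) : α ^ ((n + 1) * t + n * s) = 1 ↔ t = s := by
  rw [← orderOf_dvd_iff_pow_eq_one, hα]
  constructor
  · rintro ⟨m, hm⟩
    zify at hm
    have hdvd : (2 * n + 1 : ℤ) ∣ (t : ℤ) - s := ⟨2 * m - t - s, by linear_combination 2 * hm⟩
    have := Int.eq_zero_of_abs_lt_dvd hdvd (abs_sub_lt_iff.mpr ⟨by omega, by omega⟩)
    omega
  · rintro rfl
    exact ⟨t, by ring⟩

theorem one_add_sum_pow_add_pow_two_mul_eq_ite {α : K} {n : ℕ} (hα : orderOf α = 2 * n + 1)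
    (hn : ((2 * n : ℕ) : K) = 0) {t s : ℕ} (ht : t ≤ 2 * n) (hs : s ≤ 2 * n) :
    1 + ∑ i ∈ Icc 1 n, (α ^ ((i + n) * t) * (α ^ s) ^ (n + 1 - i) +
      (α ^ ((i + n) * t) * (α ^ s) ^ (n + 1 - i)) ^ (2 * n)) = if t = s then 1 else 0 := by
  have hα1 : α ^ (2 * n + 1) = 1 := hα ▸ pow_orderOf_eq_one α
  set w := α ^ ((n + 1) * t + n * s)
  have hw : w ^ (2 * n + 1) = 1 := by rw [← pow_mul, mul_comm, pow_mul, hα1, one_pow]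
  have hmonomial : ∀ i ∈ Icc 1 n, α ^ ((i + n) * t) * (α ^ s) ^ (n + 1 - i) = w ^ (2 * i - 1) :=
    fun i hi ↦ by
      obtain ⟨hi1, hin⟩ := mem_Icc.mp hi
      exact pow_mul_pow_eq_pow_two_mul_sub_one hα1 t s hi1 (by omega)
  rw [sum_congr rfl (g := fun i ↦ w ^ (2 * i - 1) + (w ^ (2 * i - 1)) ^ (2 * n))
    fun i hi ↦ by rw [hmonomial i hi], one_add_sum_odd_pow_add_pow_two_mul hw]
  split_ifs with hts
  · have hw1 : w = 1 := (pow_succ_mul_add_mul_eq_one_iff hα ht hs).mpr hts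
    simp [hw1, hn]
  · have hw1 : w ≠ 1 := (pow_succ_mul_add_mul_eq_one_iff hα ht hs).not.mpr hts
    rw [geom_sum_eq hw1, hw, sub_self, zero_div]

end RootOfUnity

theorem orderOf_pow_sub_one_of_orderOf_eq_sq_sub_one {G : Type*} [Monoid G] {ω : G} {q : ℕ}
    (hq : 2 ≤ q) (hω : orderOf ω = q ^ 2 - 1) : orderOf (ω ^ (q - 1)) = q + 1 := by
  have hsq : q ^ 2 - 1 = (q + 1) * (q - 1) := by
    zify [(by nlinarith : 1 ≤ q ^ 2), (by omega : 1 ≤ q)]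
    ring
  rw [orderOf_pow_of_dvd (by omega) (hω ▸ hsq ▸ dvd_mul_left _ _), hω, hsq,
    Nat.mul_div_cancel _ (by omega)]

theorem add_pow_card_eq_sum {F K ι κ : Type*} [Field F] [Fintype F] [Field K] [Algebra F K]
    (I : Finset ι) (J : Finset κ) (c : κ → F) (y : ι → κ → K) {β : K}
    (hβ : β + β ^ Fintype.card F = 1) {E : K}
    (hE : E = ∑ i ∈ I, ∑ j ∈ J, algebraMap F K (c j) * y i j + ∑ j ∈ J, algebraMap F K (c j) * β) :
    E + E ^ Fintype.card F =
      ∑ j ∈ J, algebraMap F K (c j) * (1 + ∑ i ∈ I, (y i j + y i j ^ Fintype.card F)) := by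
  have hφ : ∀ x : K, x ^ Fintype.card F = FiniteField.frobeniusAlgHom F K x := fun _ ↦ rfl
  simp only [hE, hφ, map_add, map_sum, map_mul, AlgHom.commutes] at hβ ⊢
  rw [← hβ]
  simp only [mul_add, mul_sum, sum_add_distrib]
  rw [sum_comm (s := I), sum_comm (s := I)]
  abel

theorem sum_range_ite_eq_coeff {R : Type*} [Semiring R] (P : R[X]) {N : ℕ}
    (hP : P.natDegree < N) (f : ℤ → R)
    (hf : ∀ j, f j = if 0 ≤ j then P.coeff j.toNat else 0) (m : ℤ) :
    ∑ j ∈ range N, (if (j : ℤ) = m then f j else 0) = f m := by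
  by_cases hm : 0 ≤ m ∧ m < N
  · lift m to ℕ using hm.1
    simp only [Nat.cast_inj]
    rw [sum_ite_eq', if_pos (mem_range.mpr (by omega))]
  · rw [sum_eq_zero fun j hj ↦ if_neg (by rw [mem_range] at hj; omega), hf]
    split_ifs with h0
    · exact (coeff_eq_zero_of_natDegree_lt (by omega)).symm
    · rfl

theorem ha_evaluation_odd_even_general
    (q k r : ℕ) (F K : Type*) [Field F] [Fintype F] [Field K] [Algebra F K]
    (hF : Fintype.card F = q)
    (hqeven : Even q)
    (hkr : (k : ℤ) = q - 2 * r - 1)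
    (ω : K) (hω : orderOf ω = q ^ 2 - 1)
    (α : K) (hα : α = ω ^ (q - 1))
    (c : ℤ → F)
    (hc : ∀ j : ℤ, algebraMap F K (c j) =
      if 0 ≤ j then
        (∏ i ∈ Finset.Icc (q / 2 - r) (q / 2 + r + 1), (X - C (α ^ i))).coeff j.toNat
      else 0)
    (β : K) (hβ : β + β ^ q = 1)
    (a : ℕ) (ha : a < k)
    (h : Polynomial K)
    (hh : h = ∑ i ∈ Finset.Icc 1 (q / 2), ∑ j ∈ Finset.range (2 * r + 3),
        C (algebraMap F K (c j) * α ^ ((i + q / 2) * (j + a))) * X ^ (q / 2 + 1 - i)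
      + C (∑ j ∈ Finset.range (2 * r + 3), algebraMap F K (c j) * β)) :
    ∀ s : ℕ, s ≤ q →
      h.eval (α ^ s) + (h.eval (α ^ s)) ^ q =
        algebraMap F K (c ((s : ℤ) - (a : ℤ))) := by
  intro s hs
  obtain ⟨n, rfl⟩ := hqeven.two_dvd
  have hn : 2 * n / 2 = n := by omega
  rw [hn] at hc hh
  have hαord : orderOf α = 2 * n + 1 :=
    hα ▸ orderOf_pow_sub_one_of_orderOf_eq_sq_sub_one (hF ▸ Fintype.one_lt_card) hω
  have hcard : ((2 * n : ℕ) : K) = 0 := by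
    rw [← hF, ← map_natCast (algebraMap F K), FiniteField.cast_card_eq_zero, map_zero]
  have heval : h.eval (α ^ s) = ∑ i ∈ Icc 1 n, ∑ j ∈ range (2 * r + 3),
      algebraMap F K (c j) * (α ^ ((i + n) * (j + a)) * (α ^ s) ^ (n + 1 - i)) +
        ∑ j ∈ range (2 * r + 3), algebraMap F K (c j) * β := by
    simp only [hh, eval_add, eval_finsetSum, eval_mul, eval_C, eval_pow, eval_X, mul_assoc]
  have hdeg : (∏ i ∈ Icc (n - r) (n + r + 1), (X - C (α ^ i))).natDegree < 2 * r + 3 := by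
    rw [natDegree_finsetProd_X_sub_C_eq_card, Nat.card_Icc]
    omega
  calc h.eval (α ^ s) + h.eval (α ^ s) ^ (2 * n)
      = ∑ j ∈ range (2 * r + 3), algebraMap F K (c j) * (1 + ∑ i ∈ Icc 1 n,
          (α ^ ((i + n) * (j + a)) * (α ^ s) ^ (n + 1 - i) +
            (α ^ ((i + n) * (j + a)) * (α ^ s) ^ (n + 1 - i)) ^ (2 * n))) := by
        simpa only [hF] using add_pow_card_eq_sum _ _ _ _ (hF ▸ hβ) heval
    _ = ∑ j ∈ range (2 * r + 3), if (j : ℤ) = s - a then algebraMap F K (c j) else 0 := by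
        refine sum_congr rfl fun j hj ↦ ?_
        rw [mem_range] at hj
        rw [one_add_sum_pow_add_pow_two_mul_eq_ite hαord hcard (by omega) hs, mul_ite, mul_one,
          mul_zero]
        exact if_congr (by omega) rfl rfl
    _ = algebraMap F K (c (s - a)) := sum_range_ite_eq_coeff _ hdeg _ hc _

/-- Let `q` be an even prime power and `k` odd with `1 ≤ k ≤ q`, and write
`k = q − 2r − 1`.  Let `ω` be a primitive element of `K = 𝔽_{q²}`, `α = ω^{q−1}`, and let
`c₀, …, c_{2r+2} ∈ F = 𝔽_q` be defined by
`∏_{i=q/2−r}^{q/2+r+1} (X − α^i) = Σ_{j=0}^{2r+2} c_j X^j`;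
set `c_j = 0` for `j < 0` or `j > 2r+2`.  Fix `β ∈ K` with `β + β^q = 1`, and for
`a ∈ {0, …, k−1}` define
`h_a(X) = Σ_{i=1}^{q/2} Σ_{j=0}^{2r+2} c_j α^{(i + q/2)(j+a)} X^{q/2 + 1 − i}
          + Σ_{j=0}^{2r+2} c_j β`.
Then for every `s ∈ {0, 1, …, q}`, `h_a(α^s) + h_a(α^s)^q = c_{s−a}`. -/
theorem ha_evaluation_odd_even
    (q k r : ℕ) (F K : Type*) [Field F] [Fintype F] [Field K] [Fintype K] [Algebra F K]
    (hF : Fintype.card F = q) (hK : Fintype.card K = q ^ 2)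
    (hqeven : Even q) (hkodd : Odd k) (hk1 : 1 ≤ k) (hkq : k ≤ q)
    (hkr : (k : ℤ) = q - 2 * r - 1)
    (ω : K) (hω : orderOf ω = q ^ 2 - 1)
    (α : K) (hα : α = ω ^ (q - 1))
    (c : ℤ → F)
    (hc : ∀ j : ℤ, algebraMap F K (c j) =
      if 0 ≤ j then
        (∏ i ∈ Finset.Icc (q / 2 - r) (q / 2 + r + 1), (X - C (α ^ i))).coeff j.toNat
      else 0)
    (β : K) (hβ : β + β ^ q = 1)
    (a : ℕ) (ha : a < k)
    (h : Polynomial K)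
    (hh : h = ∑ i ∈ Finset.Icc 1 (q / 2), ∑ j ∈ Finset.range (2 * r + 3),
        C (algebraMap F K (c j) * α ^ ((i + q / 2) * (j + a))) * X ^ (q / 2 + 1 - i)
      + C (∑ j ∈ Finset.range (2 * r + 3), algebraMap F K (c j) * β)) :
    ∀ s : ℕ, s ≤ q →
      h.eval (α ^ s) + (h.eval (α ^ s)) ^ q =
        algebraMap F K (c ((s : ℤ) - (a : ℤ))) :=
  ha_evaluation_odd_even_general q k r F K hF hqeven hkr ω hω α hα c hc β hβ a ha h hh
end

section
/- Let q be an odd prime power and k even with 1 ≤ k ≤ q, and write k = q − 2r + 1. Let ω be a primitive element of F_{q²}, α = ω^{q−1}, and let c_0, …, c_{2r} ∈ F_q be defined by ∏_{i=−r+1}^{r} (X − ω α^i) = Σ_{j=0}^{2r} c_j X^j. For a ∈ {0, …, k−1} define h_a(X) = Σ_{i=1}^{(q+1)/2} Σ_{j=0}^{2r} ω^{j+a} c_j α^{i(j+a)} X^{(q+1)/2 − i}. Then deg h_a ≤ k/2 − 1; in particular the coefficients of X^m in h_a vanish for all m with k/2 − 1 < m ≤ (q+1)/2 − 1. -/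
/-!
Write `h_a = Σ_{i=1}^{N} b_i X^{N-i}` with `N = (q+1)/2 = k/2 + r` and
`b_i = Σ_j c_j (ω α^i)^{j+a} = (ω α^i)^a g(ω α^i)`, where `g = Σ_j c_j X^j` is the product
defining the `c_j`. For `1 ≤ i ≤ r` the point `ω α^i` is one of the roots of `g`, so `b_i = 0`;
these are exactly the coefficients of `X^m` for `k/2 ≤ m < N`.
-/

open Polynomial Finset

namespace Polynomial

theorem sum_range_coeff_mul_pow_add_eq_zero {R : Type*} [CommSemiring R] {P : R[X]} {n : ℕ}
    (hn : P.natDegree < n) {x : R} (hx : P.IsRoot x) (a : ℕ) :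
    ∑ j ∈ range n, P.coeff j * x ^ (j + a) = 0 := by
  calc ∑ j ∈ range n, P.coeff j * x ^ (j + a)
      = (∑ j ∈ range n, P.coeff j * x ^ j) * x ^ a := by
        simp only [pow_add, sum_mul, mul_assoc]
    _ = 0 := by rw [← eval_eq_sum_range' hn, hx.eq_zero, zero_mul]

theorem coeff_sum_Icc_C_mul_X_pow_sub {R : Type*} [Semiring R] (b : ℕ → R) (N m : ℕ) :
    (∑ i ∈ Icc 1 N, C (b i) * X ^ (N - i)).coeff m = if m < N then b (N - m) else 0 := by
  simp only [finsetSum_coeff, coeff_C_mul_X_pow]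
  split_ifs with hm
  · rw [sum_eq_single_of_mem (N - m) (by rw [mem_Icc]; omega)
      fun i hi hne => by rw [mem_Icc] at hi; rw [if_neg (by omega)]]
    rw [if_pos (by omega)]
  · exact sum_eq_zero fun i hi => by rw [mem_Icc] at hi; rw [if_neg (by omega)]

end Polynomial

theorem sum_coeff_prod_X_sub_C_mul_pow_eq_zero {K : Type*} [Field K] (r : ℕ) (ω α : K)
    (a i : ℕ) (hi : 1 ≤ i) (hir : i ≤ r) :
    ∑ j ∈ range (2 * r + 1), ω ^ (j + a) *
      (∏ t ∈ Icc (-(r : ℤ) + 1) r, (X - C (ω * α ^ t))).coeff j * α ^ (i * (j + a)) = 0 := by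
  set g : K[X] := ∏ t ∈ Icc (-(r : ℤ) + 1) r, (X - C (ω * α ^ t))
  have hdeg : g.natDegree < 2 * r + 1 := by
    rw [natDegree_finsetProd_X_sub_C_eq_card, Int.card_Icc]
    omega
  have hroot : g.IsRoot (ω * α ^ i) := by
    have hi' : (i : ℤ) ∈ Icc (-(r : ℤ) + 1) r := by rw [mem_Icc]; omega
    simp only [g, IsRoot, eval_prod]
    exact prod_eq_zero hi' (by simp)
  rw [← sum_range_coeff_mul_pow_add_eq_zero hdeg hroot a]
  refine sum_congr rfl fun j _ => ?_
  rw [mul_pow, ← pow_mul, mul_comm i]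
  ring

theorem ha_degree_bound_even_odd_general
    (q k r : ℕ) (F K : Type*) [Field F] [Field K] [Algebra F K]
    (hkeven : Even k)
    (hkr : (k : ℤ) = q - 2 * r + 1)
    (ω : K)
    (α : K)
    (c : ℕ → F)
    (hc : ∀ j, algebraMap F K (c j) =
      (∏ i ∈ Finset.Icc (-(r : ℤ) + 1) (r : ℤ), (X - C (ω * α ^ i))).coeff j)
    (a : ℕ)
    (h : Polynomial K)
    (hh : h = ∑ i ∈ Finset.Icc 1 ((q + 1) / 2), ∑ j ∈ Finset.range (2 * r + 1),
        C (ω ^ (j + a) * algebraMap F K (c j) * α ^ (i * (j + a))) * X ^ ((q + 1) / 2 - i)) :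
    h.degree ≤ (k / 2 - 1 : ℕ) ∧
    ∀ m : ℕ, k / 2 - 1 < m → m ≤ (q + 1) / 2 - 1 → h.coeff m = 0 := by
  obtain ⟨t, rfl⟩ := hkeven
  set b : ℕ → K := fun i ↦ ∑ j ∈ range (2 * r + 1),
    ω ^ (j + a) * algebraMap F K (c j) * α ^ (i * (j + a))
  have hb : ∀ i, 1 ≤ i → i ≤ r → b i = 0 := fun i hi hir ↦ by
    simp only [b, hc]
    exact sum_coeff_prod_X_sub_C_mul_pow_eq_zero r ω α a i hi hir
  have hh' : h = ∑ i ∈ Icc 1 ((q + 1) / 2), C (b i) * X ^ ((q + 1) / 2 - i) := by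
    simp only [hh, b, map_sum, sum_mul]
  have hvanish : ∀ m, (t + t) / 2 - 1 < m → h.coeff m = 0 := fun m hm ↦ by
    rw [hh', coeff_sum_Icc_C_mul_X_pow_sub]
    split_ifs with hmN
    · exact hb _ (by omega) (by omega)
    · rfl
  refine ⟨degree_le_iff_coeff_zero _ _ |>.mpr fun m hm ↦ hvanish m ?_, fun m hm _ ↦ hvanish m hm⟩
  exact_mod_cast hm

/-- Let `q` be an odd prime power and `k` even with `1 ≤ k ≤ q`, and write
`k = q − 2r + 1`.  Let `ω` be a primitive element of `K = 𝔽_{q²}`, `α = ω^{q−1}`, and let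
`c₀, …, c_{2r} ∈ F = 𝔽_q` be defined by
`∏_{i=−r+1}^{r} (X − ω α^i) = Σ_{j=0}^{2r} c_j X^j`.
For `a ∈ {0, …, k−1}` define
`h_a(X) = Σ_{i=1}^{(q+1)/2} Σ_{j=0}^{2r} ω^{j+a} c_j α^{i(j+a)} X^{(q+1)/2 − i}`.
Then `deg h_a ≤ k/2 − 1`; in particular the coefficients of `X^m` in `h_a` vanish for all
`m` with `k/2 − 1 < m ≤ (q+1)/2 − 1`. -/
theorem ha_degree_bound_even_odd
    (q k r : ℕ) (F K : Type*) [Field F] [Fintype F] [Field K] [Fintype K] [Algebra F K]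
    (hF : Fintype.card F = q) (hK : Fintype.card K = q ^ 2)
    (hqodd : Odd q) (hkeven : Even k) (hk1 : 1 ≤ k) (hkq : k ≤ q)
    (hkr : (k : ℤ) = q - 2 * r + 1)
    (ω : K) (hω : orderOf ω = q ^ 2 - 1)
    (α : K) (hα : α = ω ^ (q - 1))
    (c : ℕ → F)
    (hc : ∀ j, algebraMap F K (c j) =
      (∏ i ∈ Finset.Icc (-(r : ℤ) + 1) (r : ℤ), (X - C (ω * α ^ i))).coeff j)
    (a : ℕ) (ha : a < k)
    (h : Polynomial K)
    (hh : h = ∑ i ∈ Finset.Icc 1 ((q + 1) / 2), ∑ j ∈ Finset.range (2 * r + 1),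
        C (ω ^ (j + a) * algebraMap F K (c j) * α ^ (i * (j + a))) * X ^ ((q + 1) / 2 - i)) :
    h.degree ≤ (k / 2 - 1 : ℕ) ∧
    ∀ m : ℕ, k / 2 - 1 < m → m ≤ (q + 1) / 2 - 1 → h.coeff m = 0 :=
  ha_degree_bound_even_odd_general q k r F K hkeven hkr ω α c hc a h hh
end

section
/- Let q be an odd prime power and k even with 1 ≤ k ≤ q, and write k = q − 2r + 1. Let ω be a primitive element of F_{q²}, α = ω^{q−1}, and let c_0, …, c_{2r} ∈ F_q be defined by ∏_{i=−r+1}^{r} (X − ω α^i) = Σ_{j=0}^{2r} c_j X^j; set c_j = 0 for j < 0 or j > 2r. For a ∈ {0, …, k−1} define h_a(X) = Σ_{i=1}^{(q+1)/2} Σ_{j=0}^{2r} ω^{j+a} c_j α^{i(j+a)} X^{(q+1)/2 − i}. Then for every s ∈ {0, 1, …, q}, h_a(α^s) + α^{−s} h_a(α^s)^q = ω^s (−1)^s c_{s−a}, and consequently ω^{sq} h_a(α^s) + ω^s h_a(α^s)^q = ω^{s(q+1)} (−1)^s c_{s−a}. -/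
/-! Since `α^{(q+1)/2} = -1`, `h_a(α^s) = (-1)^s Σ_j ω^{j+a} c_j S(j+a-s)` with
`S(m) = Σ_{i=1}^{(q+1)/2} α^{im}`.
The Frobenius `x ↦ x^q` of `K` over `F` fixes the `c_j`, sends `ω ↦ ωα` and `α ↦ α⁻¹`, so
`α^{-s} h_a(α^s)^q` has the same shape with `Σ_{i=1}^{(q+1)/2} α^{(1-i)m}` in place of `S(m)`.
The two sums together run over a full period of the primitive `(q+1)`-th root of unity `α`,
giving `q + 1 = 1` if `q + 1 ∣ m` and `0` otherwise; as `|j + a - s| ≤ q`, only `j = s - a`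
survives. The second identity follows from `ω^{sq} = ω^s α^s`. -/

open Polynomial Finset

theorem Finset.sum_Icc_add_one_sub_eq_sum_range {M : Type*} [AddCommMonoid M] (g : ℤ → M)
    (t : ℕ) : ∑ i ∈ Icc 1 t, (g i + g (1 - i)) = ∑ i ∈ range (2 * t), g (i + 1 - t) := by
  induction t with
  | zero => simp
  | succ t ih =>
    have shift : ∀ k : ℕ, ((k + 1 : ℕ) : ℤ) + 1 - ((t + 1 : ℕ) : ℤ) = k + 1 - t := by
      intro k; push_cast; ring
    rw [sum_Icc_succ_top (by omega), ih, show 2 * (t + 1) = 2 * t + 1 + 1 by ring,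
      sum_range_succ', sum_range_succ]
    simp only [shift]
    push_cast
    rw [add_assoc]
    congr 3
    ring

theorem sum_range_mul_ite_dvd {M : Type*} [CommSemiring M] (f : ℕ → M) (g : ℤ → M)
    {n N a s : ℕ} (hN : a + N ≤ n) (hs : s < n) (hg : ∀ j : ℤ, g j ≠ 0 → 0 ≤ j ∧ j < N)
    (x : M) :
    ∑ j ∈ range N, f (j + a) * g j * (if (n : ℤ) ∣ (j + a - s) then x else 0) =
      f s * g (s - a) * x := by
  have hdvd : ∀ j ∈ range N, (n : ℤ) ∣ (j + a - s) ↔ j + a = s := by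
    intro j hj
    have := mem_range.1 hj
    refine ⟨fun h ↦ ?_, fun h ↦ by simp [← h]⟩
    have := Int.eq_zero_of_abs_lt_dvd h (abs_lt.2 ⟨by omega, by omega⟩)
    omega
  rw [sum_congr rfl fun j hj ↦ by rw [if_congr (hdvd j hj) rfl rfl]]
  by_cases hsa : a ≤ s ∧ s < a + N
  · rw [sum_eq_single_of_mem (s - a) (mem_range.2 (by omega)) fun j _ hj ↦ by
      rw [if_neg (by omega), mul_zero]]
    rw [if_pos (by omega), Nat.sub_add_cancel hsa.1, Nat.cast_sub hsa.1]
  · have : g (s - a) = 0 := by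
      by_contra h
      have := hg _ h
      omega
    rw [this, mul_zero, zero_mul]
    exact sum_eq_zero fun j hj ↦ by rw [if_neg (by have := mem_range.1 hj; omega), mul_zero]

section

variable {K : Type*} [Field K] {ζ : K}

/-- The polynomial `h_a` of the statement, with `ζ` in place of `α` and `b j` in place of
`ω ^ (j + a) * c j`. -/
noncomputable def hPoly (ζ : K) (b : ℕ → K) (t N a : ℕ) : K[X] :=
  ∑ i ∈ Icc 1 t, ∑ j ∈ range N, C (b j * ζ ^ (i * (j + a))) * X ^ (t - i)

theorem eval_pow_hPoly {t : ℕ} (hζ0 : ζ ≠ 0) (hζt : ζ ^ t = -1) (b : ℕ → K) (N a s : ℕ) :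
    (hPoly ζ b t N a).eval (ζ ^ s) =
      (-1) ^ s * ∑ j ∈ range N, b j * ∑ i ∈ Icc 1 t, ζ ^ ((i : ℤ) * (j + a - s)) := by
  simp only [hPoly, eval_finsetSum, eval_mul, eval_C, eval_pow, eval_X]
  rw [sum_comm, mul_sum]
  refine sum_congr rfl fun j _ ↦ ?_
  rw [mul_sum, mul_sum]
  refine sum_congr rfl fun i hi ↦ ?_
  have hit : i ≤ t := (mem_Icc.1 hi).2
  have : ζ ^ (i * (j + a)) * (ζ ^ s) ^ (t - i) = (ζ ^ t) ^ s * ζ ^ ((i : ℤ) * (j + a - s)) := by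
    simp only [← zpow_natCast, ← zpow_mul, ← zpow_add₀ hζ0]
    push_cast [Nat.cast_sub hit]
    ring_nf
  rw [mul_assoc, this, hζt]
  ring

namespace IsPrimitiveRoot

theorem geom_sum_zpow_eq_ite {n : ℕ} (hζ : IsPrimitiveRoot ζ n) (m : ℤ) :
    ∑ i ∈ range n, (ζ ^ m) ^ i = if (n : ℤ) ∣ m then (n : K) else 0 := by
  split_ifs with hm
  · simp [(hζ.zpow_eq_one_iff_dvd m).2 hm]
  · have hne : ζ ^ m ≠ 1 := mt (hζ.zpow_eq_one_iff_dvd m).1 hm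
    rw [geom_sum_eq hne, ← zpow_natCast, ← zpow_mul, mul_comm, zpow_mul, hζ.zpow_eq_one,
      one_zpow, sub_self, zero_div]

theorem pow_eq_neg_one {t : ℕ} (hζ : IsPrimitiveRoot ζ (2 * t)) (ht : t ≠ 0) : ζ ^ t = -1 := by
  have := hζ.pow_of_dvd ht (dvd_mul_left t 2)
  rw [Nat.mul_div_cancel _ (Nat.pos_of_ne_zero ht)] at this
  exact this.eq_neg_one_of_two_right

theorem sum_Icc_zpow_add_zpow_one_sub {t : ℕ} (hζ : IsPrimitiveRoot ζ (2 * t)) (m : ℤ) :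
    ∑ i ∈ Icc 1 t, (ζ ^ ((i : ℤ) * m) + ζ ^ ((1 - (i : ℤ)) * m)) =
      if ((2 * t : ℕ) : ℤ) ∣ m then ((2 * t : ℕ) : K) else 0 := by
  obtain rfl | ht := t.eq_zero_or_pos
  · simp
  have hζ0 : ζ ≠ 0 := hζ.ne_zero (by omega)
  calc _ = ∑ i ∈ range (2 * t), ζ ^ (((i : ℤ) + 1 - t) * m) :=
        sum_Icc_add_one_sub_eq_sum_range (fun i : ℤ ↦ ζ ^ (i * m)) t
    _ = ζ ^ ((1 - t : ℤ) * m) * ∑ i ∈ range (2 * t), (ζ ^ m) ^ i := by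
        rw [mul_sum]
        refine sum_congr rfl fun i _ ↦ ?_
        rw [← zpow_natCast, ← zpow_mul, ← zpow_add₀ hζ0]
        ring_nf
    _ = _ := by
        rw [hζ.geom_sum_zpow_eq_ite]
        split_ifs with hm
        · rw [mul_comm _ m, zpow_mul, (hζ.zpow_eq_one_iff_dvd m).2 hm, one_zpow, one_mul]
        · rw [mul_zero]

theorem sum_Icc_zpow_add_zpow_mul_map {t : ℕ} (hζ : IsPrimitiveRoot ζ (2 * t)) (σ : K →+* K)
    (hσ : σ ζ = ζ⁻¹) (m : ℤ) :
    ∑ i ∈ Icc 1 t, ζ ^ ((i : ℤ) * m) + ζ ^ m * σ (∑ i ∈ Icc 1 t, ζ ^ ((i : ℤ) * m)) =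
      if ((2 * t : ℕ) : ℤ) ∣ m then ((2 * t : ℕ) : K) else 0 := by
  obtain rfl | ht := t.eq_zero_or_pos
  · simp
  rw [← hζ.sum_Icc_zpow_add_zpow_one_sub, sum_add_distrib, map_sum, mul_sum]
  congr 1
  refine sum_congr rfl fun i _ ↦ ?_
  rw [map_zpow₀, hσ, inv_zpow', ← zpow_add₀ (hζ.ne_zero (by omega))]
  ring_nf

theorem eval_hPoly_add_zpow_mul_map {t : ℕ} (hζ : IsPrimitiveRoot ζ (2 * t)) (σ : K →+* K)
    (hσζ : σ ζ = ζ⁻¹) (b : ℕ → K) (N a : ℕ) (hσb : ∀ j, σ (b j) = b j * ζ ^ (j + a))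
    (s : ℕ) :
    (hPoly ζ b t N a).eval (ζ ^ s) + ζ ^ (-(s : ℤ)) * σ ((hPoly ζ b t N a).eval (ζ ^ s)) =
      (-1) ^ s * ∑ j ∈ range N,
        b j * if ((2 * t : ℕ) : ℤ) ∣ (j + a - s) then ((2 * t : ℕ) : K) else 0 := by
  obtain rfl | ht := t.eq_zero_or_pos
  · simp [hPoly]
  have hζ0 : ζ ≠ 0 := hζ.ne_zero (by omega)
  rw [eval_pow_hPoly hζ0 (hζ.pow_eq_neg_one ht.ne') b N a s, map_mul, map_pow, map_neg,
    map_one, map_sum, mul_left_comm (ζ ^ (-(s : ℤ))), ← mul_add, mul_sum, ← sum_add_distrib]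
  congr 1
  refine sum_congr rfl fun j _ ↦ ?_
  rw [map_mul, hσb, ← hζ.sum_Icc_zpow_add_zpow_mul_map σ hσζ,
    show (j : ℤ) + a - s = (j + a : ℕ) + -(s : ℤ) by push_cast; ring, zpow_add₀ hζ0,
    zpow_natCast]
  ring

end IsPrimitiveRoot

end

theorem ha_evaluation_even_odd_general
    (q k r : ℕ) (F K : Type*) [Field F] [Fintype F] [Field K] [Algebra F K]
    (hF : Fintype.card F = q)
    (hqodd : Odd q)
    (hkr : (k : ℤ) = q - 2 * r + 1)
    (ω : K) (hω : orderOf ω = q ^ 2 - 1)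
    (α : K) (hα : α = ω ^ (q - 1))
    (c : ℤ → F)
    (hc : ∀ j : ℤ, algebraMap F K (c j) =
      if 0 ≤ j then
        (∏ i ∈ Finset.Icc (-(r : ℤ) + 1) (r : ℤ), (X - C (ω * α ^ i))).coeff j.toNat
      else 0)
    (a : ℕ) (ha : a < k)
    (h : Polynomial K)
    (hh : h = ∑ i ∈ Finset.Icc 1 ((q + 1) / 2), ∑ j ∈ Finset.range (2 * r + 1),
        C (ω ^ (j + a) * algebraMap F K (c j) * α ^ (i * (j + a))) * X ^ ((q + 1) / 2 - i)) :
    ∀ s : ℕ, s ≤ q →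
      (h.eval (α ^ s) + α ^ (-(s : ℤ)) * (h.eval (α ^ s)) ^ q =
        ω ^ s * (-1 : K) ^ s * algebraMap F K (c ((s : ℤ) - (a : ℤ)))) ∧
      (ω ^ (s * q) * h.eval (α ^ s) + ω ^ s * (h.eval (α ^ s)) ^ q =
        ω ^ (s * (q + 1)) * (-1 : K) ^ s * algebraMap F K (c ((s : ℤ) - (a : ℤ)))) := by
  intro s hs
  set t := (q + 1) / 2
  have hqt : q + 1 = 2 * t := by obtain ⟨m, rfl⟩ := hqodd; omega
  have hq : 1 < q := hF ▸ Fintype.one_lt_card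
  have hαprim : IsPrimitiveRoot α (2 * t) := by
    rw [← hqt, hα]
    refine (IsPrimitiveRoot.orderOf ω).pow ?_ (by rw [hω, mul_comm]; simpa using Nat.sq_sub_sq q 1)
    rw [hω]
    exact Nat.sub_pos_of_lt (Nat.one_lt_pow two_ne_zero hq)
  have hqK : ((2 * t : ℕ) : K) = 1 := by
    rw [← hqt, Nat.cast_succ, ← hF, ← map_natCast (algebraMap F K),
      FiniteField.cast_card_eq_zero, map_zero, zero_add]
  let φ : K →+* K := FiniteField.frobeniusAlgHom F K
  have hφ : ∀ x, φ x = x ^ q := fun x ↦ by simp [φ, hF]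
  have hφα : φ α = α⁻¹ :=
    hφ α ▸ eq_inv_of_mul_eq_one_left (by rw [← pow_succ, hqt, hαprim.pow_eq_one])
  have hφω : φ ω = ω * α := by rw [hφ, hα, ← pow_succ', Nat.sub_add_cancel hq.le]
  set b : ℕ → K := fun j ↦ ω ^ (j + a) * algebraMap F K (c j)
  have hφb : ∀ j, φ (b j) = b j * α ^ (j + a) := fun j ↦ by
    rw [map_mul, map_pow, hφω, hφ (algebraMap F K _), ← map_pow, ← hF, FiniteField.pow_card]
    ring
  have hsupp : ∀ j : ℤ, algebraMap F K (c j) ≠ 0 → 0 ≤ j ∧ j < (2 * r + 1 : ℕ) := by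
    intro j hj
    rw [hc] at hj
    split_ifs at hj with hj0
    · refine ⟨hj0, ?_⟩
      by_contra hlt
      refine hj (coeff_eq_zero_of_natDegree_lt ?_)
      rw [natDegree_finsetProd_X_sub_C_eq_card, Int.card_Icc]
      omega
    · exact absurd rfl hj
  have hh' : h = hPoly α b t (2 * r + 1) a := hh
  have first : h.eval (α ^ s) + α ^ (-(s : ℤ)) * (h.eval (α ^ s)) ^ q =
      ω ^ s * (-1 : K) ^ s * algebraMap F K (c ((s : ℤ) - (a : ℤ))) := by
    calc _ = (-1) ^ s * ∑ j ∈ range (2 * r + 1), b j *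
          if ((2 * t : ℕ) : ℤ) ∣ (j + a - s) then ((2 * t : ℕ) : K) else 0 := by
          rw [hh', ← hφ]
          exact hαprim.eval_hPoly_add_zpow_mul_map φ hφα b _ a hφb s
      _ = (-1) ^ s * (ω ^ s * algebraMap F K (c (s - a)) * ((2 * t : ℕ) : K)) := by
          congr 1
          exact sum_range_mul_ite_dvd (ω ^ ·) (algebraMap F K ∘ c) (by omega) (by omega) hsupp _
      _ = _ := by rw [hqK]; ring
  refine ⟨first, ?_⟩
  have hωs : ω ^ (s * q) = ω ^ s * α ^ s := by rw [mul_comm, pow_mul, ← hφ, hφω, mul_pow]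
  have hα0 : α ≠ 0 := hαprim.ne_zero (by omega)
  calc _ = ω ^ (s * q) * (h.eval (α ^ s) + α ^ (-(s : ℤ)) * (h.eval (α ^ s)) ^ q) := by
        rw [hωs, zpow_neg, zpow_natCast]
        field_simp
    _ = _ := by rw [first, show s * (q + 1) = s * q + s by ring, pow_add]; ring

/-- Let `q` be an odd prime power and `k` even with `1 ≤ k ≤ q`, and write
`k = q − 2r + 1`.  Let `ω` be a primitive element of `K = 𝔽_{q²}`, `α = ω^{q−1}`, and let
`c₀, …, c_{2r} ∈ F = 𝔽_q` be defined by
`∏_{i=−r+1}^{r} (X − ω α^i) = Σ_{j=0}^{2r} c_j X^j`;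
set `c_j = 0` for `j < 0` or `j > 2r`.  For `a ∈ {0, …, k−1}` define
`h_a(X) = Σ_{i=1}^{(q+1)/2} Σ_{j=0}^{2r} ω^{j+a} c_j α^{i(j+a)} X^{(q+1)/2 − i}`.
Then for every `s ∈ {0, 1, …, q}`,
`h_a(α^s) + α^{−s} h_a(α^s)^q = ω^s (−1)^s c_{s−a}`, and consequently
`ω^{sq} h_a(α^s) + ω^s h_a(α^s)^q = ω^{s(q+1)} (−1)^s c_{s−a}`. -/
theorem ha_evaluation_even_odd
    (q k r : ℕ) (F K : Type*) [Field F] [Fintype F] [Field K] [Fintype K] [Algebra F K]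
    (hF : Fintype.card F = q) (hK : Fintype.card K = q ^ 2)
    (hqodd : Odd q) (hkeven : Even k) (hk1 : 1 ≤ k) (hkq : k ≤ q)
    (hkr : (k : ℤ) = q - 2 * r + 1)
    (ω : K) (hω : orderOf ω = q ^ 2 - 1)
    (α : K) (hα : α = ω ^ (q - 1))
    (c : ℤ → F)
    (hc : ∀ j : ℤ, algebraMap F K (c j) =
      if 0 ≤ j then
        (∏ i ∈ Finset.Icc (-(r : ℤ) + 1) (r : ℤ), (X - C (ω * α ^ i))).coeff j.toNat
      else 0)
    (a : ℕ) (ha : a < k)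
    (h : Polynomial K)
    (hh : h = ∑ i ∈ Finset.Icc 1 ((q + 1) / 2), ∑ j ∈ Finset.range (2 * r + 1),
        C (ω ^ (j + a) * algebraMap F K (c j) * α ^ (i * (j + a))) * X ^ ((q + 1) / 2 - i)) :
    ∀ s : ℕ, s ≤ q →
      (h.eval (α ^ s) + α ^ (-(s : ℤ)) * (h.eval (α ^ s)) ^ q =
        ω ^ s * (-1 : K) ^ s * algebraMap F K (c ((s : ℤ) - (a : ℤ)))) ∧
      (ω ^ (s * q) * h.eval (α ^ s) + ω ^ s * (h.eval (α ^ s)) ^ q =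
        ω ^ (s * (q + 1)) * (-1 : K) ^ s * algebraMap F K (c ((s : ℤ) - (a : ℤ)))) :=
  ha_evaluation_even_odd_general q k r F K hF hqodd hkr ω hω α hα c hc a ha h hh
end
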